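/- arXiv:2505.16465 — 3 statements merged into one kernel-verified Lean document; each statement's English description precedes it below -/
import Mathlib

section
/- Define a sequence of positive integers by w_0 ≥ 1 and the recursion w_{m+1} ≥ w_m + w_m/(120·log(e·w_m)) for all m ≥ 0. Then w_m ≥ e^{√(m/68)} for all m ≥ 1. -/
/-!
As long as `w_m ≥ 1` the increment is positive, so the integer sequence gains at least one per
step and `w_m ≥ m + 1`; this gives `(log w_m)² ≥ m / 68` for `m ≤ 2047`, comparing `m + 1`
with powers of two. Once `L = log w_m ≥ 121/16`, the recursion gives
`log w_{m+1} ≥ L + log (1 + 1/(120(1+L))) ≥ L + 1/(121 + 120 L)`, so `(log w)²` grows by at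
least `2L/(121 + 120L) ≥ 1/68` per step, and the bound propagates to all `m`.
-/

open Real

lemma lt_add_div_log_exp_one_mul {x : ℝ} (hx : 1 ≤ x) :
    x < x + x / (120 * log (exp 1 * x)) := by
  have hlog : 0 < log (exp 1 * x) := log_pos (by nlinarith [add_one_le_exp 1])
  have : 0 < x / (120 * log (exp 1 * x)) := by positivity
  linarith

lemma sq_log_add_le_sq_log {x y : ℝ} (hx : 0 < x) (hL : 121 / 16 ≤ log x)
    (hy : x + x / (120 * log (exp 1 * x)) ≤ y) :
    log x ^ 2 + 1 / 68 ≤ log y ^ 2 := by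
  set L := log x
  have hlog : log (exp 1 * x) = 1 + L := by
    rw [log_mul (exp_ne_zero 1) hx.ne', log_exp]
  set c := 1 + 1 / (120 * (1 + L))
  have hc : 0 < c := by positivity
  have hxc : x * c ≤ y := by
    rw [hlog] at hy
    calc x * c = x + x / (120 * (1 + L)) := by ring
      _ ≤ y := hy
  have hlog_c : 1 / (121 + 120 * L) ≤ log c := by
    have h := one_sub_inv_le_log_of_pos hc
    have hc' : 1 - c⁻¹ = 1 / (121 + 120 * L) := by
      have : 120 * (1 + L) ≠ 0 := by positivity
      simp only [c]
      field_simp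
      ring
    rwa [hc'] at h
  have hstep : L + 1 / (121 + 120 * L) ≤ log y := by
    have := log_le_log (by positivity) hxc
    rw [log_mul hx.ne' hc.ne'] at this
    linarith
  -- `16 L ≥ 121` is exactly what makes the cross term `2L/(121 + 120L)` at least `1/68`.
  have hcross : 1 / 68 ≤ 2 * L * (1 / (121 + 120 * L)) := by
    rw [show 2 * L * (1 / (121 + 120 * L)) = 2 * L / (121 + 120 * L) by ring,
      div_le_div_iff₀ (by norm_num) (by positivity)]
    linarith
  calc L ^ 2 + 1 / 68 ≤ (L + 1 / (121 + 120 * L)) ^ 2 := by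
        nlinarith [sq_nonneg (1 / (121 + 120 * L))]
    _ ≤ log y ^ 2 := pow_le_pow_left₀ (by positivity) hstep 2

lemma le_sq_log_of_two_pow_le {t x : ℝ} {k : ℕ} (hk : 2 ^ k ≤ x)
    (ht : t ≤ (k * log 2) ^ 2) : t ≤ log x ^ 2 := by
  have hlog : k * log 2 ≤ log x := by
    rw [← log_pow]
    exact log_le_log (by positivity) hk
  exact ht.trans (pow_le_pow_left₀ (by positivity) hlog 2)

lemma div_68_le_sq_log_succ {m : ℕ} (hm : m ≤ 2047) : (m : ℝ) / 68 ≤ log (m + 1) ^ 2 := by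
  have hlog2 := log_two_gt_d9
  have hmR : (m : ℝ) ≤ 2047 := by exact_mod_cast hm
  rcases Nat.eq_zero_or_pos m with rfl | hm0
  · simp
  have pow_le (k : ℕ) (hk : 2 ^ k ≤ m + 1) : (2 : ℝ) ^ k ≤ m + 1 := by exact_mod_cast hk
  -- `68 (k log 2)²` exceeds `32`, `290`, `2047` for `k = 1, 3, 8`.
  rcases le_or_gt m 32 with h32 | h32
  · have : (m : ℝ) ≤ 32 := by exact_mod_cast h32
    exact le_sq_log_of_two_pow_le (pow_le 1 (by omega)) (by push_cast; nlinarith)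
  rcases le_or_gt m 290 with h290 | h290
  · have : (m : ℝ) ≤ 290 := by exact_mod_cast h290
    exact le_sq_log_of_two_pow_le (pow_le 3 (by omega)) (by push_cast; nlinarith)
  · exact le_sq_log_of_two_pow_le (pow_le 8 (by omega)) (by push_cast; nlinarith)

section Growth

variable (w : ℕ → ℕ) (h0 : 1 ≤ w 0)
  (hrec : ∀ m : ℕ, (w m : ℝ) + (w m : ℝ) / (120 * log (exp 1 * (w m : ℝ))) ≤ w (m + 1))
include h0 hrec

lemma succ_le_of_growth (m : ℕ) : m + 1 ≤ w m := by
  induction m with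
  | zero => simpa using h0
  | succ n ih =>
    have hw : (1 : ℝ) ≤ w n := by exact_mod_cast (Nat.le_add_left 1 n).trans ih
    have : (w n : ℝ) < w (n + 1) := (lt_add_div_log_exp_one_mul hw).trans_le (hrec n)
    have : w n < w (n + 1) := by exact_mod_cast this
    omega

lemma div_68_le_sq_log_of_growth (m : ℕ) : (m : ℝ) / 68 ≤ log (w m) ^ 2 := by
  have hsucc (n : ℕ) : (n : ℝ) + 1 ≤ w n := by exact_mod_cast succ_le_of_growth w h0 hrec n
  have hsmall (n : ℕ) (hn : n ≤ 2047) : (n : ℝ) / 68 ≤ log (w n) ^ 2 :=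
    calc (n : ℝ) / 68 ≤ log (n + 1) ^ 2 := div_68_le_sq_log_succ hn
      _ ≤ log (w n) ^ 2 :=
        pow_le_pow_left₀ (log_nonneg (by linarith [n.cast_nonneg (α := ℝ)]))
          (log_le_log (by positivity) (hsucc n)) 2
  rcases le_or_gt m 2047 with hm | hm
  · exact hsmall m hm
  refine Nat.le_induction (hsmall 2047 le_rfl) (fun n hn ih => ?_) m hm.le
  have h2048 : (2 : ℝ) ^ 11 ≤ w n := by
    have : (2047 : ℝ) ≤ n := by exact_mod_cast hn
    linarith [hsucc n]
  have hL : 121 / 16 ≤ log (w n : ℝ) := by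
    have := log_le_log (by positivity) h2048
    rw [log_pow] at this
    push_cast at this
    linarith [log_two_gt_d9]
  have := sq_log_add_le_sq_log (by positivity) hL (hrec n)
  push_cast
  linarith

end Growth

theorem stmt7 (w : ℕ → ℕ) (h0 : 1 ≤ w 0)
    (hrec : ∀ m : ℕ, (w m : ℝ) + (w m : ℝ) / (120 * Real.log (Real.exp 1 * (w m : ℝ)))
      ≤ (w (m + 1) : ℝ)) :
    ∀ m : ℕ, 1 ≤ m → Real.exp (Real.sqrt (m / 68)) ≤ (w m : ℝ) := by
  intro m _
  have hw : (1 : ℝ) ≤ w m := by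
    exact_mod_cast (Nat.le_add_left 1 m).trans (succ_le_of_growth w h0 hrec m)
  have hsqrt : sqrt (m / 68) ≤ log (w m) :=
    (sqrt_le_left (log_nonneg hw)).2 (div_68_le_sq_log_of_growth w h0 hrec m)
  calc exp (sqrt (m / 68)) ≤ exp (log (w m)) := exp_le_exp_of_le hsqrt
    _ = w m := exp_log (by linarith)
end

section
/- Let M > 1, r ≥ 3, and suppose x_1/y_1, …, x_ν/y_ν are distinct reduced fractions with positive denominators such that for each t, |α − x_t/y_t| ≤ M^{−ψ_t/2}/y_t² where 1/(2r) ≤ ψ_t ≤ 1, and y_1 ≤ ⋯ ≤ y_ν. If additionally M > e^{4r}, then for each t < ν, y_{t+1} > M^{0.27·ψ_t}·y_t. -/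
open Real Finset

lemma exp046_lb : (1.5838 : ℝ) ≤ Real.exp 0.46 := by
  have ha : |(0.46 : ℝ)| = 0.46 := by rw [abs_of_nonneg]; norm_num
  have h := Real.exp_bound (x := 0.46) (by rw [ha]; norm_num) (n := 6) (by norm_num)
  rw [abs_le, ha] at h
  have := h.1
  simp only [Finset.sum_range_succ] at this
  norm_num [Nat.factorial] at this
  linarith

lemma expn054_ub : Real.exp (-0.54) ≤ (0.5832 : ℝ) := by
  have ha : |(-0.54 : ℝ)| = 0.54 := by rw [abs_of_nonpos] <;> norm_num
  have h := Real.exp_bound (x := -0.54) (by rw [ha]; norm_num) (n := 6) (by norm_num)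
  rw [abs_le, ha] at h
  have := h.2
  simp only [Finset.sum_range_succ] at this
  norm_num [Nat.factorial] at this
  linarith

lemma numkey : 1 ≤ (1 - Real.exp (-1)) * Real.exp 0.46 := by
  have h : (1 - Real.exp (-1)) * Real.exp 0.46 = Real.exp 0.46 - Real.exp (-0.54) := by
    rw [sub_mul, one_mul, ← Real.exp_add]; norm_num
  rw [h]
  have := exp046_lb
  have := expn054_ub
  linarith

set_option maxHeartbeats 1000000 in
theorem stmt11 (r ν : ℕ) (hr : 3 ≤ r) (M : ℝ) (hM1 : 1 < M)
    (hM : Real.exp (4 * r) < M) (α : ℂ) (x y : ℕ → ℤ) (ψ : ℕ → ℝ)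
    (hcop : ∀ t, 1 ≤ t → t ≤ ν → IsCoprime (x t) (y t))
    (hypos : ∀ t, 1 ≤ t → t ≤ ν → 0 < y t)
    (hdist : ∀ s t, 1 ≤ s → s ≤ ν → 1 ≤ t → t ≤ ν → s ≠ t →
      x s * y t ≠ x t * y s)
    (hψ : ∀ t, 1 ≤ t → t ≤ ν → 1 / (2 * (r : ℝ)) ≤ ψ t ∧ ψ t ≤ 1)
    (happrox : ∀ t, 1 ≤ t → t ≤ ν →
      ‖α - (x t : ℂ) / (y t : ℂ)‖ ≤ M ^ (-(ψ t) / 2) / ((y t : ℝ)) ^ 2)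
    (hmono : ∀ s t, 1 ≤ s → s ≤ t → t ≤ ν → y s ≤ y t) :
    ∀ t, 1 ≤ t → t < ν → M ^ (0.27 * ψ t) * (y t : ℝ) < (y (t + 1) : ℝ) := by
  intro t ht1 htν
  have hM0 : (0 : ℝ) < M := lt_trans zero_lt_one hM1
  have htν' : t ≤ ν := le_of_lt htν
  have ht1' : 1 ≤ t + 1 := by omega
  have ht1ν : t + 1 ≤ ν := by omega
  have hr0 : (0 : ℝ) < r := by
    have : (3 : ℝ) ≤ r := by exact_mod_cast hr
    linarith
  -- log M > 4r
  have hlog : 4 * (r : ℝ) < Real.log M := by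
    have := Real.log_lt_log (Real.exp_pos _) hM
    rwa [Real.log_exp] at this
  -- denominators
  have hyt := hypos t ht1 htν'
  have hyt' := hypos (t + 1) ht1' ht1ν
  set q : ℝ := ((y t : ℤ) : ℝ) with hqdef
  set q' : ℝ := ((y (t + 1) : ℤ) : ℝ) with hq'def
  have hq : 0 < q := by rw [hqdef]; exact_mod_cast hyt
  have hq' : 0 < q' := by rw [hq'def]; exact_mod_cast hyt'
  have hqq' : q ≤ q' := by
    rw [hqdef, hq'def]; exact_mod_cast hmono t (t + 1) ht1 (by omega) ht1ν
  -- psi bounds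
  obtain ⟨hψl, hψu⟩ := hψ t ht1 htν'
  obtain ⟨hψl', hψu'⟩ := hψ (t + 1) ht1' ht1ν
  have h2rψ : 1 ≤ ψ t * (2 * r) := (div_le_iff₀ (by positivity)).mp hψl
  have h2rψ' : 1 ≤ ψ (t + 1) * (2 * r) := (div_le_iff₀ (by positivity)).mp hψl'
  have hψpos : 0 < ψ t := lt_of_lt_of_le (by positivity) hψl
  have hψ'pos : 0 < ψ (t + 1) := lt_of_lt_of_le (by positivity) hψl'
  -- abbreviations for powers
  set a : ℝ := M ^ (-(ψ t) / 2) with hadef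
  set b : ℝ := M ^ (-(ψ (t + 1)) / 2) with hbdef
  set c : ℝ := M ^ (ψ t / 2) with hcdef
  set P : ℝ := M ^ ((0.27 : ℝ) * ψ t) with hPdef
  set Q : ℝ := M ^ ((0.23 : ℝ) * ψ t) with hQdef
  have ha0 : 0 < a := Real.rpow_pos_of_pos hM0 _
  have hb0 : 0 < b := Real.rpow_pos_of_pos hM0 _
  have hc0 : 0 < c := Real.rpow_pos_of_pos hM0 _
  have hP0 : 0 < P := Real.rpow_pos_of_pos hM0 _
  have hQ0 : 0 < Q := Real.rpow_pos_of_pos hM0 _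
  have hac : a * c = 1 := by
    rw [hadef, hcdef, ← Real.rpow_add hM0, show -(ψ t) / 2 + ψ t / 2 = 0 by ring,
      Real.rpow_zero]
  have hcPQ : c = P * Q := by
    rw [hcdef, hPdef, hQdef, ← Real.rpow_add hM0]
    congr 1
    ring
  -- b < exp (-1)
  have hbe : b < Real.exp (-1) := by
    rw [hbdef, Real.rpow_def_of_pos hM0]
    apply Real.exp_lt_exp.mpr
    nlinarith [hlog, h2rψ', hψ'pos, hr0]
  -- exp 0.46 < Q
  have hEQ : Real.exp 0.46 < Q := by
    rw [hQdef, Real.rpow_def_of_pos hM0]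
    apply Real.exp_lt_exp.mpr
    nlinarith [hlog, h2rψ, hψpos, hr0]
  -- the integer cross term
  have hne : x t * y (t + 1) ≠ x (t + 1) * y t :=
    hdist t (t + 1) ht1 htν' ht1' ht1ν (by omega)
  have hint : (1 : ℤ) ≤ |x t * y (t + 1) - x (t + 1) * y t| :=
    Int.one_le_abs (sub_ne_zero.mpr hne)
  have hnum : (1 : ℝ) ≤ |((x t * y (t + 1) - x (t + 1) * y t : ℤ) : ℝ)| := by
    rw [← Int.cast_abs]
    exact_mod_cast hint
  -- complex casts nonzero
  have hyc : ((y t : ℤ) : ℂ) ≠ 0 := Int.cast_ne_zero.mpr (ne_of_gt hyt)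
  have hyc' : ((y (t + 1) : ℤ) : ℂ) ≠ 0 := Int.cast_ne_zero.mpr (ne_of_gt hyt')
  -- value of |A - B|
  have hABeq : ((x t : ℂ) / (y t : ℂ) - (x (t + 1) : ℂ) / (y (t + 1) : ℂ))
      = ((x t * y (t + 1) - x (t + 1) * y t : ℤ) : ℂ) / (((y t : ℤ) : ℂ) * ((y (t + 1) : ℤ) : ℂ)) := by
    push_cast
    field_simp
  have hABval : ‖(x t : ℂ) / (y t : ℂ) - (x (t + 1) : ℂ) / (y (t + 1) : ℂ)‖
      = |((x t * y (t + 1) - x (t + 1) * y t : ℤ) : ℝ)| / (q * q') := by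
    rw [hABeq, norm_div, norm_mul, Complex.norm_intCast, Complex.norm_intCast, Complex.norm_intCast]
    rw [hqdef, hq'def, abs_of_pos (show (0:ℝ) < ((y t : ℤ) : ℝ) by exact_mod_cast hyt),
      abs_of_pos (show (0:ℝ) < ((y (t+1) : ℤ) : ℝ) by exact_mod_cast hyt')]
  -- triangle inequality
  have hAB : ‖(x t : ℂ) / (y t : ℂ) - (x (t + 1) : ℂ) / (y (t + 1) : ℂ)‖
      ≤ a / q ^ 2 + b / q' ^ 2 := by
    calc ‖(x t : ℂ) / (y t : ℂ) - (x (t + 1) : ℂ) / (y (t + 1) : ℂ)‖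
        ≤ ‖(x t : ℂ) / (y t : ℂ) - α‖
          + ‖α - (x (t + 1) : ℂ) / (y (t + 1) : ℂ)‖ :=
          norm_sub_le_norm_sub_add_norm_sub _ _ _
      _ = ‖α - (x t : ℂ) / (y t : ℂ)‖
          + ‖α - (x (t + 1) : ℂ) / (y (t + 1) : ℂ)‖ := by
          rw [norm_sub_rev]
      _ ≤ a / q ^ 2 + b / q' ^ 2 :=
          add_le_add (happrox t ht1 htν') (happrox (t + 1) ht1' ht1ν)
  -- 1/(q q') ≤ a/q² + b/q'²
  have hchain : 1 / (q * q') ≤ (a * q' ^ 2 + b * q ^ 2) / (q ^ 2 * q' ^ 2) := by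
    have e : (a * q' ^ 2 + b * q ^ 2) / (q ^ 2 * q' ^ 2) = a / q ^ 2 + b / q' ^ 2 := by
      field_simp
    rw [e]
    calc 1 / (q * q') ≤ |((x t * y (t + 1) - x (t + 1) * y t : ℤ) : ℝ)| / (q * q') := by
          gcongr
      _ = ‖(x t : ℂ) / (y t : ℂ) - (x (t + 1) : ℂ) / (y (t + 1) : ℂ)‖ :=
          hABval.symm
      _ ≤ a / q ^ 2 + b / q' ^ 2 := hAB
  have h1 : q * q' ≤ a * q' ^ 2 + b * q ^ 2 := by
    have h2 := (div_le_div_iff₀ (by positivity) (by positivity)).mp hchain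
    have h3 : (q * q') * (q * q') ≤ (a * q' ^ 2 + b * q ^ 2) * (q * q') := by linarith [h2]
    exact le_of_mul_le_mul_right h3 (mul_pos hq hq')
  -- (1 - e⁻¹) q q' < a q'²
  have hexpneg1 : Real.exp (-1) < 1 := by
    rw [show (1:ℝ) = Real.exp 0 by rw [Real.exp_zero]]
    exact Real.exp_lt_exp.mpr (by norm_num)
  have step1 : (1 - Real.exp (-1)) * (q * q') < a * q' ^ 2 := by
    have hbq : b * (q * q) ≤ b * (q * q') :=
      mul_le_mul_of_nonneg_left (mul_le_mul_of_nonneg_left hqq' hq.le) hb0.le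
    have hbq2 : b * (q * q') < Real.exp (-1) * (q * q') :=
      mul_lt_mul_of_pos_right hbe (mul_pos hq hq')
    linarith [h1, hbq, hbq2]
  have step2 : (1 - Real.exp (-1)) * q < a * q' :=
    lt_of_mul_lt_mul_right (by linarith [step1]) (le_of_lt hq')
  have step3 : (1 - Real.exp (-1)) * c * q < q' := by
    have h := mul_lt_mul_of_pos_right step2 hc0
    calc (1 - Real.exp (-1)) * c * q = (1 - Real.exp (-1)) * q * c := by ring
      _ < a * q' * c := h
      _ = q' * (a * c) := by ring
      _ = q' := by rw [hac, mul_one]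
  have step4 : P * q ≤ (1 - Real.exp (-1)) * c * q := by
    rw [hcPQ]
    have hnk := numkey
    have hQgt : 1 ≤ (1 - Real.exp (-1)) * Q := by
      have h5 : (1 - Real.exp (-1)) * Real.exp 0.46 ≤ (1 - Real.exp (-1)) * Q :=
        mul_le_mul_of_nonneg_left hEQ.le (by linarith)
      linarith [hnk, h5]
    have h6 : 1 * (P * q) ≤ ((1 - Real.exp (-1)) * Q) * (P * q) :=
      mul_le_mul_of_nonneg_right hQgt (mul_pos hP0 hq).le
    linarith [h6]
  exact lt_of_le_of_lt step4 step3
end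

section
/- Let r ≥ 3, let α_1, …, α_m (m ≥ 1) be complex numbers, and let α_ℓ be one of them whose imaginary part has minimal absolute value. Suppose there is a real number X_2 and a constant R ≥ e² such that for each i, X_2 − Re(α_i) ≤ (R/e²)|Im(α_i)| and Re(α_i) < X_2. Then for every real ξ distinct from all α_i, |ξ − α_ℓ| ≤ (2R/e² + 3)·min_i |ξ − α_i|. -/
theorem stmt18 (r m : ℕ) (hr : 3 ≤ r) (hm : 1 ≤ m) (α : Fin m → ℂ)
    (ℓ : Fin m) (hℓ : ∀ i, |(α ℓ).im| ≤ |(α i).im|)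
    (X₂ R : ℝ) (hR : Real.exp 2 ≤ R)
    (hre : ∀ i, (α i).re < X₂)
    (him : ∀ i, X₂ - (α i).re ≤ (R / Real.exp 2) * |(α i).im|) :
    ∀ ξ : ℝ, (∀ i, (ξ : ℂ) ≠ α i) →
      ∀ i, ‖(ξ : ℂ) - α ℓ‖ ≤ (2 * R / Real.exp 2 + 3) * ‖(ξ : ℂ) - α i‖ := by
  intro ξ hξ i
  have hepos : (0:ℝ) < Real.exp 2 := Real.exp_pos 2
  have hC : (1:ℝ) ≤ R / Real.exp 2 := (one_le_div hepos).mpr hR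
  set C := R / Real.exp 2 with hCdef
  -- triangle inequality
  have htri : ‖(ξ : ℂ) - α ℓ‖ ≤
      ‖(ξ : ℂ) - α i‖ + ‖α i - α ℓ‖ := by
    calc ‖(ξ : ℂ) - α ℓ‖
        = ‖((ξ : ℂ) - α i) + (α i - α ℓ)‖ := by ring_nf
      _ ≤ _ := norm_add_le _ _
  have hbound : ‖α i - α ℓ‖ ≤
      |(α i - α ℓ).re| + |(α i - α ℓ).im| := Complex.norm_le_abs_re_add_abs_im _
  have him_le : |(α i).im| ≤ ‖(ξ : ℂ) - α i‖ := by
    have : |((ξ : ℂ) - α i).im| ≤ ‖(ξ : ℂ) - α i‖ :=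
      Complex.abs_im_le_norm _
    simpa using this
  have hre_bound : |(α i - α ℓ).re| ≤ C * |(α i).im| := by
    have h1 := him i
    have h2 := him ℓ
    have h3 := hre i
    have h4 := hre ℓ
    have h5 := hℓ i
    rw [abs_le]
    constructor <;> simp only [Complex.sub_re] <;> nlinarith [abs_nonneg (α i).im]
  have him_bound : |(α i - α ℓ).im| ≤ 2 * |(α i).im| := by
    have h5 := hℓ i
    calc |(α i - α ℓ).im| = |(α i).im - (α ℓ).im| := by simp
      _ ≤ |(α i).im| + |(α ℓ).im| := abs_sub _ _
      _ ≤ 2 * |(α i).im| := by linarith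
  have hk : 2 * R / Real.exp 2 = 2 * C := by rw [hCdef]; ring
  rw [hk]
  have habs : |(α i).im| ≥ 0 := abs_nonneg _
  nlinarith [norm_nonneg ((ξ:ℂ) - α i)]
end
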